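/- arXiv:2308.07028 — 2 statements merged into one kernel-verified Lean document; each statement's English description precedes it below -/
import Mathlib

section
/- Let R = ⊕_{i≥0} R_i be a commutative nonnegatively graded ring, I ⊆ R a homogeneous ideal with degree-zero component I_0 = I ∩ R_0, and M a graded R-module such that M_j = 0 for all j < n_0. Then for every i ∈ ℤ and every integer n with n ≥ i − n_0, the degree-i component of I^n M satisfies (I^n M)_i ⊆ I_0^{\,n + n_0 − i}·M_i. -/
/-!
`I^n M` is additively generated by the elements `(a₁ ⋯ aₙ) • m` with each `a_k ∈ I` homogeneous of
degree `d_k` and `m ∈ M_j` homogeneous, so `(I^n M)_i` is generated by those of total degree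
`∑ d_k + j = i`.  Since `d_k ≥ 0` and `j ≥ n₀`, at most `∑ d_k = i - j ≤ i - n₀` of the factors have
positive degree; the remaining at least `n + n₀ - i` factors lie in `I₀`, and the product of the
others times `m` lies in `M_i`.
-/

open DirectSum Finset

section Generators

variable {ι ιM R M : Type*} [DecidableEq ι] [AddMonoid ι] [CommRing R]
  [AddCommGroup M] [Module R M] (𝒜 : ι → AddSubgroup R) [GradedRing 𝒜]
  (ℳ : ιM → AddSubgroup M) (I : Ideal R)

def homogeneousProdSmul (n : ℕ) : Set M :=
  {x | ∃ (d : Fin n → ι) (a : Fin n → R),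
    (∀ k, a k ∈ I ∧ a k ∈ 𝒜 (d k)) ∧ ∃ j, ∃ m ∈ ℳ j, x = (∏ k, a k) • m}

theorem smul_mem_closure_homogeneousProdSmul_succ (hI : I.IsHomogeneous 𝒜) {n : ℕ} {r : R}
    (hr : r ∈ I) {x : M} (hx : x ∈ AddSubgroup.closure (homogeneousProdSmul 𝒜 ℳ I n)) :
    r • x ∈ AddSubgroup.closure (homogeneousProdSmul 𝒜 ℳ I (n + 1)) := by
  classical
  change x ∈ (AddSubgroup.closure _).comap (DistribSMul.toAddMonoidHom M r)
  refine (AddSubgroup.closure_le _).2 ?_ hx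
  rintro _ ⟨d, a, ha, j, m, hm, rfl⟩
  rw [SetLike.mem_coe, AddSubgroup.mem_comap, DistribSMul.toAddMonoidHom_apply, smul_smul, ← sum_support_decompose 𝒜 r, sum_mul, sum_smul]
  refine AddSubgroup.sum_mem _ fun e _ => AddSubgroup.subset_closure ?_
  refine ⟨Fin.cons e d, Fin.cons (decompose 𝒜 r e : R) a,
    Fin.forall_fin_succ.2 ⟨⟨hI e hr, (decompose 𝒜 r e).2⟩, ha⟩, j, m, hm, ?_⟩
  rw [Fin.prod_cons]

theorem pow_smul_top_le_closure_homogeneousProdSmul [DecidableEq ιM] [Decomposition ℳ]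
    (hI : I.IsHomogeneous 𝒜) (n : ℕ) :
    (I ^ n • ⊤ : Submodule R M).toAddSubgroup ≤
      AddSubgroup.closure (homogeneousProdSmul 𝒜 ℳ I n) := by
  classical
  induction n with
  | zero =>
    intro x _
    rw [← sum_support_decompose ℳ x]
    refine AddSubgroup.sum_mem _ fun j _ => AddSubgroup.subset_closure ?_
    exact ⟨Fin.elim0, Fin.elim0, fun k => k.elim0, j, _, (decompose ℳ x j).2, by simp⟩
  | succ n ih =>
    intro x hx
    rw [Submodule.mem_toAddSubgroup, pow_succ', ← smul_eq_mul, Submodule.smul_assoc] at hx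
    exact Submodule.smul_induction_on hx
      (fun r hr y hy => smul_mem_closure_homogeneousProdSmul_succ 𝒜 ℳ I hI hr (ih hy))
      (fun _ _ => AddSubgroup.add_mem _)

theorem decompose_mem_closure_of_forall_mem [DecidableEq ιM] [Decomposition ℳ] {i : ιM}
    {S T : Set M} (hS : ∀ s ∈ S, (decompose ℳ s i : M) ∈ AddSubgroup.closure T) {x : M}
    (hx : x ∈ AddSubgroup.closure S) : (decompose ℳ x i : M) ∈ AddSubgroup.closure T := by
  induction hx using AddSubgroup.closure_induction with
  | mem s hs => exact hS s hs
  | zero => simp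
  | add x y _ _ hx hy => simpa using add_mem hx hy
  | neg x _ hx =>
    rw [decompose_neg, DFinsupp.neg_apply, AddSubgroup.coe_neg]
    exact neg_mem hx

end Generators

theorem card_sub_sum_le_card_filter_eq_zero {κ : Type*} (s : Finset κ) (d : κ → ℤ)
    (hd : ∀ k ∈ s, 0 ≤ d k) : (#s : ℤ) - ∑ k ∈ s, d k ≤ #{k ∈ s | d k = 0} := by
  have hpos : #{k ∈ s | ¬d k = 0} ≤ ∑ k ∈ s with d k ≠ 0, d k := by
    simpa using card_nsmul_le_sum _ d 1 fun k hk => by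
      rw [mem_filter] at hk
      have := hd k hk.1
      omega
  have hcard := card_filter_add_card_filter_not (s := s) (d · = 0)
  rw [sum_filter_ne_zero] at hpos
  omega

section DegreeZero

variable {ι ιM R M : Type*} [Zero ι] [CommRing R] [AddCommGroup M] [Module R M]
  (𝒜 : ι → AddSubgroup R) (ℳ : ιM → AddSubgroup M) (I : Ideal R)

/-- Additive generators of `I₀^m • M_i`, where `I₀ = I ∩ R₀`. -/
def degZeroPowSmul (m : ℕ) (i : ιM) : Set M :=
  {y | ∃ c : Fin m → R, (∀ j, c j ∈ I ∧ c j ∈ 𝒜 0) ∧ ∃ z ∈ ℳ i, y = (∏ j, c j) • z}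

theorem finset_prod_smul_mem_degZeroPowSmul {κ : Type*} (T : Finset κ) (c : κ → R)
    (hc : ∀ k ∈ T, c k ∈ I ∧ c k ∈ 𝒜 0) {i : ιM} {z : M} (hz : z ∈ ℳ i) :
    (∏ k ∈ T, c k) • z ∈ degZeroPowSmul 𝒜 ℳ I #T i := by
  refine ⟨fun j => c (T.equivFin.symm j), fun j => hc _ (T.equivFin.symm j).2, z, hz, ?_⟩
  rw [← prod_coe_sort T c, ← T.equivFin.symm.prod_comp]

end DegreeZero

section Main

variable {R M : Type*} [CommRing R] [AddCommGroup M] [Module R M]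
  {𝒜 : ℤ → AddSubgroup R} [SetLike.GradedMonoid 𝒜] {ℳ : ℤ → AddSubgroup M}
  [SetLike.GradedSMul 𝒜 ℳ] {I : Ideal R} {n₀ i : ℤ} {n : ℕ}

theorem prod_smul_mem_degZeroPowSmul {d : Fin n → ℤ} (hd : ∀ k, 0 ≤ d k)
    {a : Fin n → R} (ha : ∀ k, a k ∈ I ∧ a k ∈ 𝒜 (d k)) {j : ℤ} (hj : n₀ ≤ j) {m : M}
    (hm : m ∈ ℳ j) (hdeg : ∑ k, d k + j = i) :
    (∏ k, a k) • m ∈ degZeroPowSmul 𝒜 ℳ I ((n : ℤ) + n₀ - i).toNat i := by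
  classical
  have hzeros := card_sub_sum_le_card_filter_eq_zero univ d fun k _ => hd k
  rw [card_univ, Fintype.card_fin] at hzeros
  obtain ⟨T, hTZ, hTcard⟩ := exists_subset_card_eq (s := {k | d k = 0})
    (n := ((n : ℤ) + n₀ - i).toNat) (by rw [Int.toNat_le]; omega)
  have hT : ∀ k ∈ T, d k = 0 := fun k hk => (mem_filter.1 (hTZ hk)).2
  have hrest : (∏ k ∈ Tᶜ, a k) • m ∈ ℳ i := by
    have hsum : ∑ k ∈ Tᶜ, d k + j = i := by
      rw [← hdeg, ← sum_add_sum_compl T d, sum_eq_zero hT, zero_add]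
    rw [← hsum, ← vadd_eq_add]
    exact SetLike.GradedSMul.smul_mem (SetLike.prod_mem_graded 𝒜 d a fun k _ => (ha k).2) hm
  rw [← prod_mul_prod_compl T a, mul_smul, ← hTcard]
  exact finset_prod_smul_mem_degZeroPowSmul 𝒜 ℳ I T a
    (fun k hk => ⟨(ha k).1, hT k hk ▸ (ha k).2⟩) hrest

theorem decompose_prod_smul_mem_closure_degZeroPowSmul [Decomposition ℳ]
    (hneg : ∀ e : ℤ, e < 0 → 𝒜 e = ⊥) (hlow : ∀ j : ℤ, j < n₀ → ℳ j = ⊥) {d : Fin n → ℤ}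
    {a : Fin n → R} (ha : ∀ k, a k ∈ I ∧ a k ∈ 𝒜 (d k)) {j : ℤ} {m : M} (hm : m ∈ ℳ j) :
    (decompose ℳ ((∏ k, a k) • m) i : M) ∈
      AddSubgroup.closure (degZeroPowSmul 𝒜 ℳ I ((n : ℤ) + n₀ - i).toNat i) := by
  by_cases hd : ∀ k, 0 ≤ d k
  · by_cases hj : n₀ ≤ j
    · have hprod : (∏ k, a k) • m ∈ ℳ (∑ k, d k + j) :=
        SetLike.GradedSMul.smul_mem (SetLike.prod_mem_graded 𝒜 d a fun k _ => (ha k).2) hm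
      by_cases hdeg : ∑ k, d k + j = i
      · rw [decompose_of_mem_same ℳ (hdeg ▸ hprod)]
        exact AddSubgroup.subset_closure (prod_smul_mem_degZeroPowSmul hd ha hj hm hdeg)
      · rw [decompose_of_mem_ne ℳ hprod hdeg]
        exact zero_mem _
    · obtain rfl : m = 0 := by simpa [hlow j (not_le.1 hj)] using hm
      simp
  · obtain ⟨k, hk⟩ := not_forall.1 hd
    have hak : a k = 0 := by simpa [hneg (d k) (not_le.1 hk)] using (ha k).2
    simp [prod_eq_zero (mem_univ k) hak]

end Main

theorem statement1_general
    (R : Type*) [CommRing R] (𝒜 : ℤ → AddSubgroup R) [GradedRing 𝒜]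
    (hneg : ∀ i : ℤ, i < 0 → 𝒜 i = ⊥)
    (M : Type*) [AddCommGroup M] [Module R M]
    (ℳ : ℤ → AddSubgroup M) [DirectSum.Decomposition ℳ] [SetLike.GradedSMul 𝒜 ℳ]
    (I : Ideal R) (hI : I.IsHomogeneous 𝒜)
    (n₀ : ℤ) (hlow : ∀ j : ℤ, j < n₀ → ℳ j = ⊥)
    (i : ℤ) (n : ℕ) :
    ∀ x : M, x ∈ (I ^ n • ⊤ : Submodule R M) → x ∈ ℳ i →
      x ∈ AddSubgroup.closure
        {y : M | ∃ c : Fin ((n : ℤ) + n₀ - i).toNat → R,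
          (∀ j, c j ∈ I ∧ c j ∈ 𝒜 0) ∧ ∃ z ∈ ℳ i, y = (∏ j, c j) • z} := by
  intro x hx hxi
  rw [← decompose_of_mem_same ℳ hxi]
  refine decompose_mem_closure_of_forall_mem ℳ ?_
    (pow_smul_top_le_closure_homogeneousProdSmul 𝒜 ℳ I hI n hx)
  rintro _ ⟨d, a, ha, j, m, hm, rfl⟩
  exact decompose_prod_smul_mem_closure_degZeroPowSmul hneg hlow ha hm

theorem statement1
    (R : Type*) [CommRing R] (𝒜 : ℤ → AddSubgroup R) [GradedRing 𝒜]
    (hneg : ∀ i : ℤ, i < 0 → 𝒜 i = ⊥)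
    (M : Type*) [AddCommGroup M] [Module R M]
    (ℳ : ℤ → AddSubgroup M) [DirectSum.Decomposition ℳ] [SetLike.GradedSMul 𝒜 ℳ]
    (I : Ideal R) (hI : I.IsHomogeneous 𝒜)
    (n₀ : ℤ) (hlow : ∀ j : ℤ, j < n₀ → ℳ j = ⊥)
    (i : ℤ) (n : ℕ) (hn : i - n₀ ≤ (n : ℤ)) :
    ∀ x : M, x ∈ (I ^ n • ⊤ : Submodule R M) → x ∈ ℳ i →
      x ∈ AddSubgroup.closure
        {y : M | ∃ c : Fin ((n : ℤ) + n₀ - i).toNat → R,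
          (∀ j, c j ∈ I ∧ c j ∈ 𝒜 0) ∧ ∃ z ∈ ℳ i, y = (∏ j, c j) • z} :=
  statement1_general R 𝒜 hneg M ℳ I hI n₀ hlow i n
end

section
/- Let k be a field and B a finite-dimensional associative k-algebra equipped with two nonnegative algebra gradings B = ⊕_{i≥0} B^i and B = ⊕_{i≥0} C^i, such that for each grading the degree-zero part (B^0, respectively C^0) is a semisimple k-algebra and B is generated as an algebra by its components of degrees 0 and 1 in that grading. Then both gradings induce the same filtration of B by powers of the Jacobson radical, namely rad(B)^i = ⊕_{j≥i} B^j = ⊕_{j≥i} C^j for all i ≥ 0, and consequently there is an isomorphism of graded k-algebras (B, ⊕_i B^i) ≅ (B, ⊕_i C^i) — obtained by composing the canonical graded isomorphisms of each graded algebra with the associated graded algebra ⊕_i rad(B)^i/rad(B)^{i+1} of the radical filtration — which induces the identity map on the semisimple quotient B/rad(B). -/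
/-!
STATEMENT 7: Let `k` be a field and `B` a finite-dimensional associative `k`-algebra with two
nonnegative algebra gradings `B = ⊕_{i≥0} 𝒜ⁱ = ⊕_{i≥0} ℬⁱ`, each with semisimple degree-zero
part and each generating `B` in degrees `0` and `1`.  Then both gradings induce the radical
filtration, i.e. `rad(B)^i = ⊕_{j≥i} 𝒜ʲ = ⊕_{j≥i} ℬʲ` for all `i ≥ 0`, and consequently there
is an isomorphism of graded `k`-algebras `(B, 𝒜) ≅ (B, ℬ)` (i.e. a `k`-algebra automorphism of
`B` carrying `𝒜ⁱ` onto `ℬⁱ` for every `i`) which induces the identity on `B / rad(B)` (i.e.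
`e b ≡ b mod rad(B)` for every `b`).

Here the Jacobson radical is `(⊥ : Ideal B).jacobson`, regarded as a `k`-submodule of `B`, and
`radPow k B i` denotes its `i`-th power (as a product of `k`-submodules), with the convention
`radPow k B 0 = ⊤`.
-/

open Submodule

/-- The powers of the Jacobson radical of `B`, as `k`-submodules, with the convention that the
`0`-th power is all of `B`. -/
noncomputable def radPow (k B : Type*) [CommSemiring k] [Ring B] [Algebra k B] (i : ℕ) :
    Submodule k B :=
  if i = 0 then ⊤ else (Submodule.restrictScalars k ((⊥ : Ideal B).jacobson)) ^ i

/-!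
The kernel of the projection `B → 𝒜 0` is the tail `⨁_{j ≥ 1} 𝒜 j`. It consists of nilpotent
elements (`B` is finite-dimensional, so only finitely many degrees occur) and the quotient `𝒜 0` is
semisimple, so it is the Jacobson radical; generation in degrees `0` and `1` then makes its `i`-th
power the tail `⨁_{j ≥ i} 𝒜 j`. Hence two such gradings `𝒜`, `ℬ` have the same tails. Then every
`a ∈ 𝒜 i` is congruent to its `ℬ`-component of degree `i` modulo the `(i+1)`-st tail, so taking
that component is a linear isomorphism `𝒜 i ≃ ℬ i` for each `i`; the resulting automorphism of `B`
is multiplicative because products of congruences modulo tails are again congruences.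
-/

open DirectSum

section Jacobson
variable {R S : Type*} [Ring R] [Ring S]

theorem jacobson_bot_le_ker_of_surjective [IsSemisimpleRing S] {f : R →+* S}
    (hf : Function.Surjective f) : (⊥ : Ideal R).jacobson ≤ RingHom.ker f := by
  have h := Ideal.comap_jacobson_of_surjective hf (K := ⊥)
  rw [Ideal.jacobson_bot, IsSemisimpleRing.jacobson_eq_bot, ← RingHom.ker_eq_comap_bot] at h
  exact (Ideal.jacobson_mono bot_le).trans h.ge

theorem le_jacobson_bot_of_isNilpotent {I : Ideal R} (hI : ∀ x ∈ I, IsNilpotent x) :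
    I ≤ (⊥ : Ideal R).jacobson := fun x hx => Ideal.mem_jacobson_iff.2 fun y => by
  obtain ⟨z, hz⟩ := (hI _ (I.mul_mem_left y hx)).isUnit_one_add.exists_left_inv
  refine ⟨z, Ideal.mem_bot.2 ?_⟩
  rw [← hz]
  noncomm_ring

end Jacobson

namespace GradedAlgebra
variable {ι R A : Type*} [DecidableEq ι] [AddMonoid ι] [CommSemiring R] [Semiring A] [Algebra R A]
  (𝒜 : ι → Submodule R A) [GradedAlgebra 𝒜]

theorem proj_mem (i : ι) (x : A) : proj 𝒜 i x ∈ 𝒜 i := SetLike.coe_mem _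

theorem proj_of_mem {i : ι} {x : A} (hx : x ∈ 𝒜 i) : proj 𝒜 i x = x :=
  decompose_of_mem_same 𝒜 hx

theorem proj_of_mem_of_ne {i j : ι} {x : A} (hx : x ∈ 𝒜 i) (h : i ≠ j) : proj 𝒜 j x = 0 :=
  decompose_of_mem_ne 𝒜 hx h

theorem proj_mem_of_mem_iSup_inf {Q : ι → Submodule R A} {x : A} (hx : x ∈ ⨆ j, 𝒜 j ⊓ Q j)
    (m : ι) : proj 𝒜 m x ∈ Q m := by
  refine Submodule.iSup_induction _ (motive := fun y => proj 𝒜 m y ∈ Q m) hx ?_ (by simp)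
    fun y z hy hz => (map_add (proj 𝒜 m) y z).symm ▸ add_mem hy hz
  intro j y hy
  obtain rfl | hjm := eq_or_ne j m
  · exact (proj_of_mem 𝒜 hy.1).symm ▸ hy.2
  · exact (proj_of_mem_of_ne 𝒜 hy.1 hjm).symm ▸ zero_mem _

end GradedAlgebra

open GradedAlgebra

section GradeTail
variable {k B : Type*} [CommRing k] [Ring B] [Algebra k B] (𝒜 : ℕ → Submodule k B)

def gradeTail (i : ℕ) : Submodule k B := ⨆ j ≥ i, 𝒜 j

theorem le_gradeTail {i j : ℕ} (h : i ≤ j) : 𝒜 j ≤ gradeTail 𝒜 i :=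
  le_iSup₂ (f := fun j _ => 𝒜 j) j h

theorem gradeTail_antitone : Antitone (gradeTail 𝒜) := fun _ _ h =>
  iSup₂_le fun _ hj => le_gradeTail 𝒜 (h.trans hj)

variable [GradedAlgebra 𝒜]

theorem gradeTail_zero : gradeTail 𝒜 0 = ⊤ :=
  eq_top_iff.2 <| (Decomposition.isInternal 𝒜).submodule_iSup_eq_top.ge.trans <|
    iSup_le fun j => le_gradeTail 𝒜 j.zero_le

theorem mem_gradeTail_iff {i : ℕ} {x : B} : x ∈ gradeTail 𝒜 i ↔ ∀ j < i, proj 𝒜 j x = 0 := by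
  constructor
  · intro hx j hj
    have : gradeTail 𝒜 i ≤ LinearMap.ker (proj 𝒜 j) :=
      iSup₂_le fun l hl y hy => proj_of_mem_of_ne 𝒜 hy (by omega)
    exact this hx
  · classical
    intro h
    rw [← sum_support_decompose 𝒜 x]
    refine Submodule.sum_mem _ fun j hj => le_gradeTail 𝒜 ?_ (SetLike.coe_mem _)
    by_contra! hji
    exact (GradedAlgebra.mem_support_iff 𝒜 x j).1 hj (h j hji)

instance : SetLike.GradedMonoid (gradeTail 𝒜) where
  one_mem := by simp [gradeTail_zero]
  mul_mem i j a b ha hb := by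
    have : gradeTail 𝒜 i * gradeTail 𝒜 j ≤ gradeTail 𝒜 (i + j) := by
      simp only [gradeTail, Submodule.iSup_mul, Submodule.mul_iSup]
      refine iSup₂_le fun l hl => iSup₂_le fun m hm => ?_
      exact Submodule.mul_le.2 (fun x hx y hy => SetLike.mul_mem_graded hx hy) |>.trans
        (le_gradeTail 𝒜 (by omega))
    exact this (Submodule.mul_mem_mul ha hb)

theorem sub_proj_mem_gradeTail {i : ℕ} {x : B} (hx : x ∈ gradeTail 𝒜 i) :
    x - proj 𝒜 i x ∈ gradeTail 𝒜 (i + 1) := by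
  refine (mem_gradeTail_iff 𝒜).2 fun j hj => ?_
  rcases (Nat.lt_succ_iff.1 hj).lt_or_eq with hji | rfl
  · rw [map_sub, (mem_gradeTail_iff 𝒜).1 hx j hji,
      proj_of_mem_of_ne 𝒜 (proj_mem 𝒜 i x) hji.ne', sub_zero]
  · rw [map_sub, proj_of_mem 𝒜 (proj_mem 𝒜 j x), sub_self]

theorem proj_eq_of_sub_mem_gradeTail {i : ℕ} {x y : B} (h : x - y ∈ gradeTail 𝒜 (i + 1)) :
    proj 𝒜 i x = proj 𝒜 i y := by
  rw [← sub_eq_zero, ← map_sub]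
  exact (mem_gradeTail_iff 𝒜).1 h i i.lt_succ_self

theorem exists_gradeTail_eq_bot [IsNoetherian k B] : ∃ N, gradeTail 𝒜 N = ⊥ := by
  obtain ⟨N, hN⟩ := (Submodule.finite_ne_bot_of_iSupIndep
    (Decomposition.isInternal 𝒜).submodule_iSupIndep).bddAbove
  refine ⟨N + 1, eq_bot_iff.2 (iSup₂_le fun j hj => le_bot_iff.2 ?_)⟩
  by_contra h
  have := hN h
  omega

theorem isNilpotent_of_mem_gradeTail_one [IsNoetherian k B] {x : B}
    (hx : x ∈ gradeTail 𝒜 1) : IsNilpotent x := by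
  obtain ⟨N, hN⟩ := exists_gradeTail_eq_bot 𝒜
  refine ⟨N, ?_⟩
  simpa [hN] using SetLike.pow_mem_graded N hx

theorem mem_ker_projZeroRingHom'_iff {x : B} :
    x ∈ RingHom.ker (GradedRing.projZeroRingHom' 𝒜) ↔ x ∈ gradeTail 𝒜 1 := by
  rw [mem_gradeTail_iff, RingHom.mem_ker, Nat.forall_lt_succ_left, Subtype.ext_iff]
  simp [proj_apply]

theorem jacobson_bot_eq_gradeTail_one [IsNoetherian k B] [IsSemisimpleRing (𝒜 0)] :
    (⊥ : Ideal B).jacobson.restrictScalars k = gradeTail 𝒜 1 := by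
  have hker : (⊥ : Ideal B).jacobson = RingHom.ker (GradedRing.projZeroRingHom' 𝒜) :=
    le_antisymm (jacobson_bot_le_ker_of_surjective (GradedRing.projZeroRingHom'_surjective 𝒜))
      (le_jacobson_bot_of_isNilpotent fun x hx =>
        isNilpotent_of_mem_gradeTail_one 𝒜 ((mem_ker_projZeroRingHom'_iff 𝒜).1 hx))
  ext x
  rw [Submodule.restrictScalars_mem, hker, mem_ker_projZeroRingHom'_iff]

end GradeTail

section RadPow
variable {k B : Type*} [CommRing k] [Ring B] [Algebra k B]

theorem radPow_zero : radPow k B 0 = ⊤ := if_pos rfl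

theorem radPow_succ (n : ℕ) :
    radPow k B (n + 1) = ((⊥ : Ideal B).jacobson.restrictScalars k) ^ (n + 1) :=
  if_neg n.succ_ne_zero

theorem top_mul_jacobson_bot_le :
    ⊤ * (⊥ : Ideal B).jacobson.restrictScalars k ≤ (⊥ : Ideal B).jacobson.restrictScalars k :=
  Submodule.mul_le.2 fun a _ _ hx => (⊥ : Ideal B).jacobson.mul_mem_left a hx

theorem jacobson_bot_mul_top_le :
    (⊥ : Ideal B).jacobson.restrictScalars k * ⊤ ≤ (⊥ : Ideal B).jacobson.restrictScalars k :=
  Submodule.mul_le.2 fun _ hx a _ => (⊥ : Ideal B).jacobson.mul_mem_right a hx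

theorem top_mul_radPow_le (n : ℕ) : ⊤ * radPow k B n ≤ radPow k B n := by
  cases n with
  | zero => exact le_top
  | succ n =>
    rw [radPow_succ, pow_succ', ← mul_assoc]
    exact mul_le_mul_left top_mul_jacobson_bot_le _

theorem radPow_mul_top_le (n : ℕ) : radPow k B n * ⊤ ≤ radPow k B n := by
  cases n with
  | zero => exact le_top
  | succ n =>
    rw [radPow_succ, pow_succ, mul_assoc]
    exact mul_le_mul_right jacobson_bot_mul_top_le _

instance : SetLike.GradedMonoid (radPow k B) where
  one_mem := by simp [radPow_zero]
  mul_mem i j a b ha hb := by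
    cases i with
    | zero =>
      rw [zero_add]
      exact top_mul_radPow_le j (Submodule.mul_mem_mul (by simp) hb)
    | succ i =>
      cases j with
      | zero => exact radPow_mul_top_le _ (Submodule.mul_mem_mul ha (by simp))
      | succ j =>
        rw [radPow_succ] at ha hb
        have : radPow k B (i + 1 + (j + 1)) =
            ((⊥ : Ideal B).jacobson.restrictScalars k) ^ (i + 1) *
              ((⊥ : Ideal B).jacobson.restrictScalars k) ^ (j + 1) := by
          rw [← pow_add]
          exact radPow_succ _
        exact this ▸ Submodule.mul_mem_mul ha hb

theorem radPow_antitone : Antitone (radPow k B) := by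
  refine antitone_nat_of_succ_le fun n => ?_
  cases n with
  | zero => exact le_top
  | succ n =>
    calc radPow k B (n + 2) = radPow k B (n + 1) * radPow k B 1 := by
          rw [radPow_succ, radPow_succ, radPow_succ, zero_add, pow_one, pow_succ]
      _ ≤ radPow k B (n + 1) * ⊤ := mul_le_mul_right le_top _
      _ ≤ radPow k B (n + 1) := radPow_mul_top_le _

end RadPow

section Generation
variable {k B : Type*} [CommRing k] [Ring B] [Algebra k B] (𝒜 : ℕ → Submodule k B) [GradedAlgebra 𝒜]
  (P : ℕ → Submodule k B) [SetLike.GradedMonoid P]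

theorem iSup_inf_eq_top_of_adjoin_eq_top (hgen : Algebra.adjoin k ((𝒜 0 : Set B) ∪ 𝒜 1) = ⊤)
    (h0 : 𝒜 0 ≤ P 0) (h1 : 𝒜 1 ≤ P 1) : ⨆ j, 𝒜 j ⊓ P j = ⊤ := by
  have one_mem : (1 : B) ∈ ⨆ j, 𝒜 j ⊓ P j :=
    Submodule.mem_iSup_of_mem 0 ⟨SetLike.one_mem_graded 𝒜, SetLike.one_mem_graded P⟩
  have mul_le : (⨆ j, 𝒜 j ⊓ P j) * (⨆ j, 𝒜 j ⊓ P j) ≤ ⨆ j, 𝒜 j ⊓ P j := by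
    simp only [Submodule.iSup_mul, Submodule.mul_iSup]
    exact iSup_le fun j => iSup_le fun l => Submodule.mul_le.2 fun _ hx _ hy =>
      Submodule.mem_iSup_of_mem (l + j)
        ⟨SetLike.mul_mem_graded hx.1 hy.1, SetLike.mul_mem_graded hx.2 hy.2⟩
  have hle : Algebra.adjoin k ((𝒜 0 : Set B) ∪ 𝒜 1) ≤ Submodule.toSubalgebra _ one_mem
      fun x y hx hy => mul_le (Submodule.mul_mem_mul hx hy) := by
    rw [Algebra.adjoin_le_iff]
    rintro x (hx | hx)
    · exact Submodule.mem_iSup_of_mem 0 ⟨hx, h0 hx⟩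
    · exact Submodule.mem_iSup_of_mem 1 ⟨hx, h1 hx⟩
  rw [hgen] at hle
  exact eq_top_iff.2 fun x _ => hle Algebra.mem_top

theorem grade_le_of_adjoin_eq_top (hgen : Algebra.adjoin k ((𝒜 0 : Set B) ∪ 𝒜 1) = ⊤)
    (h0 : 𝒜 0 ≤ P 0) (h1 : 𝒜 1 ≤ P 1) (m : ℕ) : 𝒜 m ≤ P m := fun _ hx =>
  proj_of_mem 𝒜 hx ▸ proj_mem_of_mem_iSup_inf 𝒜
    ((iSup_inf_eq_top_of_adjoin_eq_top 𝒜 P hgen h0 h1).ge Submodule.mem_top) m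

theorem pow_le_of_gradedMonoid (n : ℕ) : P 1 ^ n ≤ P n := by
  induction n with
  | zero => exact Submodule.one_le.2 (SetLike.one_mem_graded P)
  | succ n ih =>
    rw [pow_succ]
    exact (mul_le_mul_left ih _).trans
      (Submodule.mul_le.2 fun a ha b hb => SetLike.mul_mem_graded ha hb)

end Generation

theorem radPow_eq_gradeTail {k B : Type*} [CommRing k] [Ring B] [Algebra k B] [IsNoetherian k B]
    (𝒜 : ℕ → Submodule k B) [GradedAlgebra 𝒜] [IsSemisimpleRing (𝒜 0)]
    (hgen : Algebra.adjoin k ((𝒜 0 : Set B) ∪ 𝒜 1) = ⊤) (i : ℕ) :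
    radPow k B i = gradeTail 𝒜 i := by
  have h1 : 𝒜 1 ≤ radPow k B 1 := by
    rw [radPow_succ, zero_add, pow_one, jacobson_bot_eq_gradeTail_one 𝒜]
    exact le_gradeTail 𝒜 le_rfl
  refine le_antisymm ?_ (iSup₂_le fun j hj => ?_)
  · cases i with
    | zero => rw [radPow_zero, gradeTail_zero]
    | succ i =>
      rw [radPow_succ, jacobson_bot_eq_gradeTail_one 𝒜]
      exact pow_le_of_gradedMonoid _ _
  · exact (grade_le_of_adjoin_eq_top 𝒜 _ hgen le_top h1 j).trans (radPow_antitone hj)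

namespace DirectSum.Decomposition
variable {ι R M N : Type*} [DecidableEq ι] [Semiring R] [AddCommMonoid M] [Module R M]
  [AddCommMonoid N] [Module R N] {ℳ : ι → Submodule R M} {𝒩 : ι → Submodule R N}
  [Decomposition ℳ] [Decomposition 𝒩]

noncomputable def linearEquivOfGradewise (φ : ∀ i, ℳ i ≃ₗ[R] 𝒩 i) : M ≃ₗ[R] N :=
  (decomposeLinearEquiv ℳ).trans
    ((DFinsupp.mapRange.linearEquiv φ).trans (decomposeLinearEquiv 𝒩).symm)

theorem linearEquivOfGradewise_apply_coe (φ : ∀ i, ℳ i ≃ₗ[R] 𝒩 i) {i : ι} (x : ℳ i) :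
    linearEquivOfGradewise φ x = φ i x := by
  have : DFinsupp.mapRange.linearEquiv φ (of _ i x) = of _ i (φ i x) :=
    DFinsupp.mapRange_single (hf := fun i => map_zero (φ i))
  rw [linearEquivOfGradewise, LinearEquiv.trans_apply, LinearEquiv.trans_apply,
    decomposeLinearEquiv_apply, decompose_coe, this, decomposeLinearEquiv_symm_apply,
    decompose_symm_of]

theorem map_linearEquivOfGradewise (φ : ∀ i, ℳ i ≃ₗ[R] 𝒩 i) (i : ι) :
    (ℳ i).map (linearEquivOfGradewise φ : M →ₗ[R] N) = 𝒩 i := by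
  ext y
  constructor
  · rintro ⟨x, hx, rfl⟩
    exact (linearEquivOfGradewise_apply_coe φ ⟨x, hx⟩).symm ▸ SetLike.coe_mem _
  · intro hy
    refine ⟨(φ i).symm ⟨y, hy⟩, SetLike.coe_mem _, ?_⟩
    simp [linearEquivOfGradewise_apply_coe]

end DirectSum.Decomposition

section Comparison
variable {k B : Type*} [CommRing k] [Ring B] [Algebra k B] {𝒜 ℬ : ℕ → Submodule k B}
  [GradedAlgebra ℬ]

theorem sub_proj_mem_gradeTail_of_mem (htail : gradeTail 𝒜 = gradeTail ℬ)
    {i : ℕ} {a : B} (ha : a ∈ 𝒜 i) : a - proj ℬ i a ∈ gradeTail ℬ (i + 1) :=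
  sub_proj_mem_gradeTail ℬ (htail ▸ le_gradeTail 𝒜 le_rfl ha)

theorem proj_mul_of_mem (htail : gradeTail 𝒜 = gradeTail ℬ) {i j : ℕ} {a b : B} (ha : a ∈ 𝒜 i)
    (hb : b ∈ 𝒜 j) : proj ℬ (i + j) (a * b) = proj ℬ i a * proj ℬ j b := by
  rw [← proj_of_mem ℬ (SetLike.mul_mem_graded (proj_mem ℬ i a) (proj_mem ℬ j b))]
  refine proj_eq_of_sub_mem_gradeTail ℬ ?_
  have hab : a * b - proj ℬ i a * proj ℬ j b =
      (a - proj ℬ i a) * b + proj ℬ i a * (b - proj ℬ j b) := by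
    noncomm_ring
  have hb' : b ∈ gradeTail ℬ j := htail ▸ le_gradeTail 𝒜 le_rfl hb
  have hpa : proj ℬ i a ∈ gradeTail ℬ i := le_gradeTail ℬ le_rfl (proj_mem ℬ i a)
  have h₁ : (a - proj ℬ i a) * b ∈ gradeTail ℬ (i + 1 + j) :=
    SetLike.mul_mem_graded (sub_proj_mem_gradeTail_of_mem htail ha) hb'
  have h₂ : proj ℬ i a * (b - proj ℬ j b) ∈ gradeTail ℬ (i + (j + 1)) :=
    SetLike.mul_mem_graded hpa (sub_proj_mem_gradeTail_of_mem htail hb)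
  rw [hab]
  rw [Nat.add_right_comm] at h₁
  exact add_mem h₁ h₂

variable [GradedAlgebra 𝒜]

theorem proj_proj_of_mem (htail : gradeTail 𝒜 = gradeTail ℬ) {i : ℕ} {a : B} (ha : a ∈ 𝒜 i) :
    proj 𝒜 i (proj ℬ i a) = a := by
  refine (proj_eq_of_sub_mem_gradeTail 𝒜 ?_).trans (proj_of_mem 𝒜 ha)
  rw [htail, ← neg_sub]
  exact neg_mem (sub_proj_mem_gradeTail_of_mem htail ha)

noncomputable def gradeEquivOfGradeTailEq (htail : gradeTail 𝒜 = gradeTail ℬ) (i : ℕ) :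
    𝒜 i ≃ₗ[k] ℬ i where
  toFun a := ⟨proj ℬ i a, proj_mem ℬ i a⟩
  invFun b := ⟨proj 𝒜 i b, proj_mem 𝒜 i b⟩
  map_add' _ _ := Subtype.ext (map_add _ _ _)
  map_smul' _ _ := Subtype.ext (map_smul _ _ _)
  left_inv a := Subtype.ext (proj_proj_of_mem htail a.2)
  right_inv b := Subtype.ext (proj_proj_of_mem htail.symm b.2)

noncomputable def linearEquivOfGradeTailEq (htail : gradeTail 𝒜 = gradeTail ℬ) : B ≃ₗ[k] B :=
  Decomposition.linearEquivOfGradewise (gradeEquivOfGradeTailEq htail)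

theorem linearEquivOfGradeTailEq_apply_of_mem (htail : gradeTail 𝒜 = gradeTail ℬ) {i : ℕ}
    {a : B} (ha : a ∈ 𝒜 i) : linearEquivOfGradeTailEq htail a = proj ℬ i a :=
  Decomposition.linearEquivOfGradewise_apply_coe _ ⟨a, ha⟩

theorem linearEquivOfGradeTailEq_mul (htail : gradeTail 𝒜 = gradeTail ℬ) (x y : B) :
    linearEquivOfGradeTailEq htail (x * y) =
      linearEquivOfGradeTailEq htail x * linearEquivOfGradeTailEq htail y := by
  induction x using Decomposition.inductionOn 𝒜 generalizing y with
  | zero => simp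
  | add x x' hx hx' => simp only [add_mul, map_add, hx, hx']
  | homogeneous a =>
    induction y using Decomposition.inductionOn 𝒜 with
    | zero => simp
    | add y y' hy hy' => simp only [mul_add, map_add, hy, hy']
    | homogeneous b =>
      simp only [linearEquivOfGradeTailEq_apply_of_mem htail a.2,
        linearEquivOfGradeTailEq_apply_of_mem htail b.2,
        linearEquivOfGradeTailEq_apply_of_mem htail (SetLike.mul_mem_graded a.2 b.2),
        proj_mul_of_mem htail a.2 b.2]

noncomputable def algEquivOfGradeTailEq (htail : gradeTail 𝒜 = gradeTail ℬ) : B ≃ₐ[k] B :=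
  AlgEquiv.ofLinearEquiv (linearEquivOfGradeTailEq htail)
    (by rw [linearEquivOfGradeTailEq_apply_of_mem htail (SetLike.one_mem_graded 𝒜),
      proj_of_mem ℬ (SetLike.one_mem_graded ℬ)])
    (linearEquivOfGradeTailEq_mul htail)

theorem map_algEquivOfGradeTailEq (htail : gradeTail 𝒜 = gradeTail ℬ) (i : ℕ) :
    (𝒜 i).map (algEquivOfGradeTailEq htail).toLinearMap = ℬ i :=
  Decomposition.map_linearEquivOfGradewise _ i

theorem algEquivOfGradeTailEq_sub_mem (htail : gradeTail 𝒜 = gradeTail ℬ) (x : B) :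
    algEquivOfGradeTailEq htail x - x ∈ gradeTail ℬ 1 := by
  induction x using Decomposition.inductionOn 𝒜 with
  | zero => simp
  | add x x' hx hx' =>
    rw [map_add, add_sub_add_comm]
    exact add_mem hx hx'
  | homogeneous a =>
    have h := sub_proj_mem_gradeTail_of_mem htail a.2
    rw [← neg_sub, ← linearEquivOfGradeTailEq_apply_of_mem htail a.2] at h
    exact gradeTail_antitone ℬ (Nat.le_add_left 1 _) (neg_mem_iff.1 h)

end Comparison

theorem statement7
    (k B : Type*) [Field k] [Ring B] [Algebra k B] [FiniteDimensional k B]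
    (𝒜 : ℕ → Submodule k B) [GradedRing 𝒜]
    (ℬ : ℕ → Submodule k B) [GradedRing ℬ]
    (hssA : IsSemisimpleRing (𝒜 0)) (hssB : IsSemisimpleRing (ℬ 0))
    (hgenA : Algebra.adjoin k ((𝒜 0 : Set B) ∪ (𝒜 1 : Set B)) = ⊤)
    (hgenB : Algebra.adjoin k ((ℬ 0 : Set B) ∪ (ℬ 1 : Set B)) = ⊤) :
    -- both gradings induce the radical filtration:
    (∀ i : ℕ, radPow k B i = ⨆ j ≥ i, 𝒜 j ∧ radPow k B i = ⨆ j ≥ i, ℬ j)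
    -- and there is an isomorphism of graded `k`-algebras `(B, 𝒜) ≅ (B, ℬ)` inducing the
    -- identity on `B / rad(B)`:
    ∧ (∃ e : B ≃ₐ[k] B,
        (∀ i : ℕ, Submodule.map (e.toLinearMap) (𝒜 i) = ℬ i) ∧
        (∀ b : B, e b - b ∈ (⊥ : Ideal B).jacobson)) := by
  have := hssA
  have := hssB
  have hA := radPow_eq_gradeTail 𝒜 hgenA
  have hB := radPow_eq_gradeTail ℬ hgenB
  have htail : gradeTail 𝒜 = gradeTail ℬ := funext fun i => (hA i).symm.trans (hB i)
  refine ⟨fun i => ⟨hA i, hB i⟩, algEquivOfGradeTailEq htail, map_algEquivOfGradeTailEq htail,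
    fun x => ?_⟩
  rw [← Submodule.restrictScalars_mem k, jacobson_bot_eq_gradeTail_one ℬ]
  exact algEquivOfGradeTailEq_sub_mem htail x
end
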